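/- arXiv:math/0102074 — 2 statements merged into one kernel-verified Lean document; each statement's English description precedes it below -/
import Mathlib

section
/- Graded Leibniz rule for the deformed differential algebra: let d : Ω → Ω be an R-linear map preserving the (n₁,n₂)-bidegree and raising form degree by one, i.e. d maps Ω_{(k,n₁,n₂)} into Ω_{(k+1,n₁,n₂)}, which satisfies the graded Leibniz rule d(ω·ρ) = d(ω)·ρ + (-1)^k ω·d(ρ) for ω of form degree k. Then d satisfies the graded Leibniz rule for the deformed product: for homogeneous ω ∈ Ω_{(k,p₁,p₂)} and ρ ∈ Ω_{(l,q₁,q₂)}, d(ω ⋆ ρ) = d(ω) ⋆ ρ + (-1)^k ω ⋆ d(ρ). Hence the deformed complex Ω_λ with the undeformed d is a differential graded algebra. -/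
theorem deformed_graded_leibniz_general {R Ω : Type*} [CommRing R] [Ring Ω] [Algebra R Ω]
    (𝒜 : ℤ × ℤ × ℤ → Submodule R Ω)
    (l : Rˣ) (d : Ω →ₗ[R] Ω)
    (hd_leibniz : ∀ (k : ℤ) (n : ℤ × ℤ) (ω : Ω), ω ∈ 𝒜 (k, n) →
      ∀ ρ : Ω, d (ω * ρ) = d ω * ρ + ((-1 : ℤˣ) ^ k) • (ω * d ρ))
    (k : ℤ) (p q : ℤ × ℤ) (ω ρ : Ω)
    (hω : ω ∈ 𝒜 (k, p)) :
    d ((l ^ (p.1 * q.2)) • (ω * ρ)) =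
      (l ^ (p.1 * q.2)) • (d ω * ρ) +
        ((-1 : ℤˣ) ^ k) • ((l ^ (p.1 * q.2)) • (ω * d ρ)) := by
  rw [LinearMap.map_smul_of_tower, hd_leibniz k p ω hω ρ, smul_add, smul_comm]

/-- **Graded Leibniz rule for the deformed differential algebra.**
`Ω` is an `R`-algebra graded by `ℤ × ℤ × ℤ` (form degree `k` together with a bidegree
`(n₁, n₂)`), and `d : Ω → Ω` is an `R`-linear map sending `Ω (k, n₁, n₂)` into
`Ω (k + 1, n₁, n₂)` and satisfying the graded Leibniz rule
`d (ω * ρ) = d ω * ρ + (-1) ^ k • (ω * d ρ)` for `ω` of form degree `k`.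
For homogeneous `ω ∈ Ω (k, p₁, p₂)` and `ρ ∈ Ω (m, q₁, q₂)` the deformed product is
`ω ⋆ ρ = l ^ (p₁ * q₂) • (ω * ρ)`; then `d (ω ⋆ ρ) = d ω ⋆ ρ + (-1) ^ k • (ω ⋆ d ρ)`,
so the deformed complex with the undeformed `d` is a differential graded algebra. -/
theorem deformed_graded_leibniz {R Ω : Type*} [CommRing R] [Ring Ω] [Algebra R Ω]
    (𝒜 : ℤ × ℤ × ℤ → Submodule R Ω) [SetLike.GradedMonoid 𝒜]
    (l : Rˣ) (d : Ω →ₗ[R] Ω)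
    (hd_deg : ∀ (u : ℤ × ℤ × ℤ) (ω : Ω), ω ∈ 𝒜 u → d ω ∈ 𝒜 (u.1 + 1, u.2))
    (hd_leibniz : ∀ (k : ℤ) (n : ℤ × ℤ) (ω : Ω), ω ∈ 𝒜 (k, n) →
      ∀ ρ : Ω, d (ω * ρ) = d ω * ρ + ((-1 : ℤˣ) ^ k) • (ω * d ρ))
    (k m : ℤ) (p q : ℤ × ℤ) (ω ρ : Ω)
    (hω : ω ∈ 𝒜 (k, p)) (hρ : ρ ∈ 𝒜 (m, q)) :
    d ((l ^ (p.1 * q.2)) • (ω * ρ)) =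
      (l ^ (p.1 * q.2)) • (d ω * ρ) +
        ((-1 : ℤˣ) ^ k) • ((l ^ (p.1 * q.2)) • (ω * d ρ)) :=
  deformed_graded_leibniz_general 𝒜 l d hd_leibniz k p q ω ρ hω
end

section
/- Twisted antipode: let Ψ = Σ Ψ₍₁₎ ⊗ Ψ₍₂₎ be an invertible element of H ⊗ H satisfying the cocycle condition Ψ₁₂ · ((Δ ⊗ id)(Ψ)) = Ψ₂₃ · ((id ⊗ Δ)(Ψ)) and the counit normalization (ε ⊗ id)(Ψ) = 1 = (id ⊗ ε)(Ψ). Set U := Σ Ψ₍₁₎ · S(Ψ₍₂₎) ∈ H, assume U is invertible, and define S_Ψ(t) := U · S(t) · U⁻¹ and Δ_Ψ(t) := Ψ · Δ(t) · Ψ⁻¹. Then S_Ψ is an antipode for the twisted bialgebra: m ∘ (S_Ψ ⊗ id) ∘ Δ_Ψ = η ∘ ε = m ∘ (id ⊗ S_Ψ) ∘ Δ_Ψ, where m is the multiplication of H and η : R → H the unit map. -/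
/-!
The maps `x ⊗ y ↦ x * w * S y` and `x ⊗ y ↦ S x * v * y` are a left and a right action of the
algebra `H ⊗ H` on `H`, because `S` is an anti-homomorphism, and for `w = v = 1` they send `Δ t`
to `ε t` by the antipode axioms. Since `Δ_Ψ t = Ψ * Δ t * Ψ⁻¹`, both antipode identities for
`S_Ψ` then reduce to `Ψ⁻¹ * Ψ = 1` and to `U * V = 1`, where `V = Σ S (Ψ⁻¹₍₁₎) * Ψ⁻¹₍₂₎`; in
particular `U⁻¹ = V`. For `U * V = 1`, the cocycle condition rewrites `Ψ₂₃⁻¹ * Ψ₁₂` as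
`(id ⊗ Δ) Ψ * (Δ ⊗ id) Ψ⁻¹`. Applying `x ⊗ y ⊗ z ↦ x * S y * z` to the first expression gives
`U * V`, and to the second, by the antipode axioms on the middle legs,
`(id ⊗ ε) Ψ * (ε ⊗ id) Ψ⁻¹ = 1`.
-/

open TensorProduct

/-- The twisted comultiplication `Δ_Ψ t = Ψ * Δ t * Ψ⁻¹` of a bialgebra `H` by an
(invertible) element `Ψ` of `H ⊗ H` (with chosen inverse `Ψinv`), as a linear map. -/
noncomputable def twistedComul {R H : Type*} [CommRing R] [Ring H] [Bialgebra R H]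
    (Ψ Ψinv : H ⊗[R] H) : H →ₗ[R] H ⊗[R] H :=
  (LinearMap.mulRight R Ψinv) ∘ₗ (LinearMap.mulLeft R Ψ) ∘ₗ Coalgebra.comul

/-- The element `U = Σ Ψ₍₁₎ * S (Ψ₍₂₎)` of a Hopf algebra `H` associated with a
twist `Ψ ∈ H ⊗ H`, i.e. `m ∘ (id ⊗ S)` applied to `Ψ`. -/
noncomputable def twistU {R H : Type*} [CommRing R] [Ring H] [HopfAlgebra R H]
    (Ψ : H ⊗[R] H) : H :=
  LinearMap.mul' R H ((HopfAlgebra.antipode (R := R)).lTensor H Ψ)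

/-- The twisted antipode `S_Ψ t = U * S t * U⁻¹` (with chosen inverse `Uinv` of `U`),
as a linear map. -/
noncomputable def twistedAntipode {R H : Type*} [CommRing R] [Ring H] [HopfAlgebra R H]
    (U Uinv : H) : H →ₗ[R] H :=
  (LinearMap.mulRight R Uinv) ∘ₗ (LinearMap.mulLeft R U) ∘ₗ HopfAlgebra.antipode (R := R)

open HopfAlgebra

section Sandwich

variable {R H : Type*} [CommSemiring R] [Semiring H] [HopfAlgebra R H]

/-- `x ⊗ y ↦ x * w * S y`, a left action of the algebra `H ⊗ H` on `H`. -/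
noncomputable def antipodeSandwichR (w : H) : H ⊗[R] H →ₗ[R] H :=
  LinearMap.mul' R H ∘ₗ TensorProduct.map (LinearMap.mulRight R w) (antipode R)

/-- `x ⊗ y ↦ S x * v * y`, a right action of the algebra `H ⊗ H` on `H`. -/
noncomputable def antipodeSandwichL (v : H) : H ⊗[R] H →ₗ[R] H :=
  LinearMap.mul' R H ∘ₗ TensorProduct.map (LinearMap.mulRight R v ∘ₗ antipode R) LinearMap.id

@[simp]
lemma antipodeSandwichR_tmul (w x y : H) :
    antipodeSandwichR w (x ⊗ₜ[R] y) = x * w * antipode R y := by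
  simp [antipodeSandwichR]

@[simp]
lemma antipodeSandwichL_tmul (v x y : H) :
    antipodeSandwichL v (x ⊗ₜ[R] y) = antipode R x * v * y := by
  simp [antipodeSandwichL]

lemma antipodeSandwichR_one_eq :
    antipodeSandwichR (1 : H) = LinearMap.mul' R H ∘ₗ (antipode R).lTensor H := by
  rw [antipodeSandwichR, LinearMap.mulRight_one]
  rfl

lemma antipodeSandwichL_one_eq :
    antipodeSandwichL (1 : H) = LinearMap.mul' R H ∘ₗ (antipode R).rTensor H := by
  rw [antipodeSandwichL, LinearMap.mulRight_one, LinearMap.id_comp]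
  rfl

lemma antipodeSandwichR_one_comul (t : H) :
    antipodeSandwichR 1 (Coalgebra.comul (R := R) t) = algebraMap R H (Coalgebra.counit t) := by
  rw [antipodeSandwichR_one_eq]
  exact mul_antipode_lTensor_comul_apply t

lemma antipodeSandwichL_one_comul (t : H) :
    antipodeSandwichL 1 (Coalgebra.comul (R := R) t) = algebraMap R H (Coalgebra.counit t) := by
  rw [antipodeSandwichL_one_eq]
  exact mul_antipode_rTensor_comul_apply t

lemma antipodeSandwichR_apply_one (w : H) : antipodeSandwichR w (1 : H ⊗[R] H) = w := by
  simp [Algebra.TensorProduct.one_def]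

lemma antipodeSandwichL_apply_one (v : H) : antipodeSandwichL v (1 : H ⊗[R] H) = v := by
  simp [Algebra.TensorProduct.one_def]

lemma antipodeSandwichR_smul (r : R) (w : H) (M : H ⊗[R] H) :
    antipodeSandwichR (r • w) M = r • antipodeSandwichR w M := by
  induction M using TensorProduct.induction_on with
  | zero => simp
  | tmul x y => simp
  | add a b ha hb => simp [ha, hb]

lemma antipodeSandwichL_smul (r : R) (v : H) (M : H ⊗[R] H) :
    antipodeSandwichL (r • v) M = r • antipodeSandwichL v M := by
  induction M using TensorProduct.induction_on with
  | zero => simp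
  | tmul x y => simp
  | add a b ha hb => simp [ha, hb]

lemma antipodeSandwichR_mul (w : H) (A B : H ⊗[R] H) :
    antipodeSandwichR w (A * B) = antipodeSandwichR (antipodeSandwichR w B) A := by
  induction A using TensorProduct.induction_on with
  | zero => simp
  | tmul x y =>
    induction B using TensorProduct.induction_on with
    | zero => simp
    | tmul p q =>
      simp only [Algebra.TensorProduct.tmul_mul_tmul, antipodeSandwichR_tmul,
        antipode_mul_antidistrib, mul_assoc]
    | add a b ha hb => simp only [mul_add, map_add, ha, hb, antipodeSandwichR_tmul, add_mul]
  | add a b ha hb => simp only [add_mul, map_add, ha, hb]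

lemma antipodeSandwichL_mul (v : H) (A B : H ⊗[R] H) :
    antipodeSandwichL v (A * B) = antipodeSandwichL (antipodeSandwichL v A) B := by
  induction B using TensorProduct.induction_on with
  | zero => simp
  | tmul x y =>
    induction A using TensorProduct.induction_on with
    | zero => simp
    | tmul p q =>
      simp only [Algebra.TensorProduct.tmul_mul_tmul, antipodeSandwichL_tmul,
        antipode_mul_antidistrib, mul_assoc]
    | add a b ha hb => simp only [add_mul, map_add, ha, hb, antipodeSandwichL_tmul, mul_add]
  | add a b ha hb => simp only [mul_add, map_add, ha, hb]

noncomputable def mulAntipodeMul : H ⊗[R] (H ⊗[R] H) →ₗ[R] H :=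
  LinearMap.mul' R H ∘ₗ (antipodeSandwichL (1 : H)).lTensor H

@[simp]
lemma mulAntipodeMul_tmul (x : H) (M : H ⊗[R] H) :
    mulAntipodeMul (x ⊗ₜ[R] M) = x * antipodeSandwichL 1 M := by
  simp [mulAntipodeMul]

lemma mulAntipodeMul_one_tmul_mul_assoc (F G : H ⊗[R] H) :
    mulAntipodeMul ((1 ⊗ₜ[R] G) * Algebra.TensorProduct.assoc R R R H H H (F ⊗ₜ[R] 1)) =
      antipodeSandwichR 1 F * antipodeSandwichL 1 G := by
  induction F using TensorProduct.induction_on with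
  | zero => simp
  | tmul x y =>
    induction G using TensorProduct.induction_on with
    | zero => simp
    | tmul p q =>
      simp only [Algebra.TensorProduct.assoc_tmul, Algebra.TensorProduct.tmul_mul_tmul,
        mulAntipodeMul_tmul, antipodeSandwichL_tmul, antipodeSandwichR_tmul, one_mul, mul_one,
        antipode_mul_antidistrib, mul_assoc]
    | add a b ha hb => simp only [tmul_add, add_mul, mul_add, map_add, ha, hb]
  | add a b ha hb => simp only [add_tmul, map_add, mul_add, add_mul, ha, hb]

lemma mulAntipodeMul_tmul_mul_assoc_tmul (x q : H) (c d : H ⊗[R] H) :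
    mulAntipodeMul ((x ⊗ₜ[R] d) * Algebra.TensorProduct.assoc R R R H H H (c ⊗ₜ[R] q)) =
      x * antipodeSandwichR 1 c * antipodeSandwichL 1 d * q := by
  induction c using TensorProduct.induction_on with
  | zero => simp
  | tmul c₁ c₂ =>
    induction d using TensorProduct.induction_on with
    | zero => simp
    | tmul d₁ d₂ =>
      simp only [Algebra.TensorProduct.assoc_tmul, Algebra.TensorProduct.tmul_mul_tmul,
        mulAntipodeMul_tmul, antipodeSandwichL_tmul, antipodeSandwichR_tmul, mul_one,
        antipode_mul_antidistrib, mul_assoc]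
    | add a b ha hb => simp only [tmul_add, add_mul, mul_add, map_add, ha, hb]
  | add a b ha hb => simp only [add_tmul, map_add, add_mul, mul_add, ha, hb]

lemma mulAntipodeMul_map_comul_mul_assoc_map_comul (F G : H ⊗[R] H) :
    mulAntipodeMul
        (Algebra.TensorProduct.map (AlgHom.id R H) (Bialgebra.comulAlgHom R H) F *
          Algebra.TensorProduct.assoc R R R H H H
            (Algebra.TensorProduct.map (Bialgebra.comulAlgHom R H) (AlgHom.id R H) G)) =
      TensorProduct.rid R H (TensorProduct.map LinearMap.id (Coalgebra.counit (R := R)) F) *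
        TensorProduct.lid R H (TensorProduct.map (Coalgebra.counit (R := R)) LinearMap.id G) := by
  induction F using TensorProduct.induction_on with
  | zero => simp
  | tmul x s =>
    induction G using TensorProduct.induction_on with
    | zero => simp
    | tmul p q =>
      simp only [Algebra.TensorProduct.map_tmul, AlgHom.coe_id, id_eq,
        Bialgebra.comulAlgHom_apply, mulAntipodeMul_tmul_mul_assoc_tmul,
        antipodeSandwichR_one_comul, antipodeSandwichL_one_comul, map_tmul, LinearMap.id_coe,
        rid_tmul, lid_tmul]
      rw [Algebra.smul_def, Algebra.smul_def, Algebra.commutes _ x, mul_assoc x, ← map_mul,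
        mul_comm (Coalgebra.counit p), map_mul]
      simp only [mul_assoc]
    | add a b ha hb => simp only [map_add, mul_add, ha, hb]
  | add a b ha hb => simp only [map_add, add_mul, ha, hb]

end Sandwich

lemma inv_mul_eq_mul_inv_of_mul_eq_mul {M : Type*} [Monoid M] {a b c d b' c' : M}
    (h : a * b = c * d) (hc : c' * c = 1) (hb : b * b' = 1) : c' * a = d * b' := by
  rw [← mul_one (c' * a), ← hb, mul_assoc, ← mul_assoc a, h, ← mul_assoc, ← mul_assoc, hc,
    one_mul]

section Twist

variable {R H : Type*} [CommRing R] [Ring H] [HopfAlgebra R H]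

lemma twistU_eq_antipodeSandwichR (Ψ : H ⊗[R] H) : twistU Ψ = antipodeSandwichR 1 Ψ := by
  rw [antipodeSandwichR_one_eq]
  rfl

lemma twistU_mul_antipodeSandwichL_inv {Ψ Ψinv : H ⊗[R] H}
    (hΨ : Ψ * Ψinv = 1) (hΨ' : Ψinv * Ψ = 1)
    (hcocycle :
      (Algebra.TensorProduct.assoc R R R H H H) (Ψ ⊗ₜ[R] (1 : H)) *
          (Algebra.TensorProduct.assoc R R R H H H)
            ((Algebra.TensorProduct.map (Bialgebra.comulAlgHom R H) (AlgHom.id R H)) Ψ) =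
        ((1 : H) ⊗ₜ[R] Ψ) *
          (Algebra.TensorProduct.map (AlgHom.id R H) (Bialgebra.comulAlgHom R H)) Ψ)
    (hcounit_left :
      (TensorProduct.lid R H)
        ((TensorProduct.map (Coalgebra.counit (R := R) (A := H)) LinearMap.id) Ψ) = 1)
    (hcounit_right :
      (TensorProduct.rid R H)
        ((TensorProduct.map LinearMap.id (Coalgebra.counit (R := R) (A := H))) Ψ) = 1) :
    twistU Ψ * antipodeSandwichL 1 Ψinv = 1 := by
  let counitId : H ⊗[R] H →ₐ[R] H :=
    (Algebra.TensorProduct.lid R H).toAlgHom.comp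
      (Algebra.TensorProduct.map (Bialgebra.counitAlgHom R H) (AlgHom.id R H))
  have hcocycle' : ((1 : H) ⊗ₜ[R] Ψinv) * Algebra.TensorProduct.assoc R R R H H H (Ψ ⊗ₜ[R] 1) =
      Algebra.TensorProduct.map (AlgHom.id R H) (Bialgebra.comulAlgHom R H) Ψ *
        Algebra.TensorProduct.assoc R R R H H H
          (Algebra.TensorProduct.map (Bialgebra.comulAlgHom R H) (AlgHom.id R H) Ψinv) := by
    refine inv_mul_eq_mul_inv_of_mul_eq_mul hcocycle ?_ ?_
    · rw [Algebra.TensorProduct.tmul_mul_tmul, one_mul, hΨ']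
      rfl
    · rw [← map_mul, ← map_mul, hΨ, map_one, map_one]
  have hcounit_left_inv : counitId Ψinv = 1 := by
    have hcounitId : counitId Ψ = 1 := hcounit_left
    calc counitId Ψinv = counitId Ψ * counitId Ψinv := by rw [hcounitId, one_mul]
      _ = 1 := by rw [← map_mul, hΨ, map_one]
  calc twistU Ψ * antipodeSandwichL 1 Ψinv
      = mulAntipodeMul (((1 : H) ⊗ₜ[R] Ψinv) *
          Algebra.TensorProduct.assoc R R R H H H (Ψ ⊗ₜ[R] 1)) := by
        rw [mulAntipodeMul_one_tmul_mul_assoc, twistU_eq_antipodeSandwichR]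
    _ = 1 := by
        rw [hcocycle', mulAntipodeMul_map_comul_mul_assoc_map_comul, hcounit_right, one_mul]
        exact hcounit_left_inv

lemma twistedComul_apply (Ψ Ψinv : H ⊗[R] H) (t : H) :
    twistedComul Ψ Ψinv t = Ψ * Coalgebra.comul t * Ψinv :=
  rfl

lemma mul_twistedAntipode_rTensor_apply (U V : H) (M : H ⊗[R] H) :
    LinearMap.mul' R H (TensorProduct.map (twistedAntipode U V) LinearMap.id M) =
      U * antipodeSandwichL V M := by
  induction M using TensorProduct.induction_on with
  | zero => simp
  | tmul x y => simp [twistedAntipode, mul_assoc]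
  | add a b ha hb => simp only [map_add, ha, hb, mul_add]

lemma mul_twistedAntipode_lTensor_apply (U V : H) (M : H ⊗[R] H) :
    LinearMap.mul' R H (TensorProduct.map LinearMap.id (twistedAntipode U V) M) =
      antipodeSandwichR U M * V := by
  induction M using TensorProduct.induction_on with
  | zero => simp
  | tmul x y => simp [twistedAntipode, mul_assoc]
  | add a b ha hb => simp only [map_add, ha, hb, add_mul]

lemma mul_twistedAntipode_rTensor_twistedComul_apply {Ψ Ψinv : H ⊗[R] H} {U : H}
    (hΨ' : Ψinv * Ψ = 1) (hUV : U * antipodeSandwichL 1 Ψinv = 1) (t : H) :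
    LinearMap.mul' R H ((TensorProduct.map (twistedAntipode U (antipodeSandwichL 1 Ψinv))
        LinearMap.id) (twistedComul Ψ Ψinv t)) = algebraMap R H (Coalgebra.counit t) := by
  have hΨ_act : antipodeSandwichL (antipodeSandwichL 1 Ψinv) Ψ = 1 := by
    rw [← antipodeSandwichL_mul, hΨ', antipodeSandwichL_apply_one]
  rw [mul_twistedAntipode_rTensor_apply, twistedComul_apply, antipodeSandwichL_mul,
    antipodeSandwichL_mul, hΨ_act, antipodeSandwichL_one_comul, Algebra.algebraMap_eq_smul_one,
    antipodeSandwichL_smul, mul_smul_comm, hUV]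

lemma mul_twistedAntipode_lTensor_twistedComul_apply {Ψ Ψinv : H ⊗[R] H} {V : H}
    (hΨ' : Ψinv * Ψ = 1) (hUV : twistU Ψ * V = 1) (t : H) :
    LinearMap.mul' R H ((TensorProduct.map LinearMap.id (twistedAntipode (twistU Ψ) V))
        (twistedComul Ψ Ψinv t)) = algebraMap R H (Coalgebra.counit t) := by
  have hΨinv_act : antipodeSandwichR (twistU Ψ) Ψinv = 1 := by
    rw [twistU_eq_antipodeSandwichR, ← antipodeSandwichR_mul, hΨ', antipodeSandwichR_apply_one]
  rw [mul_twistedAntipode_lTensor_apply, twistedComul_apply, antipodeSandwichR_mul,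
    antipodeSandwichR_mul, hΨinv_act, antipodeSandwichR_one_comul, Algebra.algebraMap_eq_smul_one,
    antipodeSandwichR_smul, ← twistU_eq_antipodeSandwichR, smul_mul_assoc, hUV]

end Twist

theorem twistedAntipode_is_antipode_general {R H : Type*} [CommRing R] [Ring H] [HopfAlgebra R H]
    (Ψ Ψinv : H ⊗[R] H)
    (hΨ : Ψ * Ψinv = 1) (hΨ' : Ψinv * Ψ = 1)
    (hcocycle :
      (Algebra.TensorProduct.assoc R R R H H H) (Ψ ⊗ₜ[R] (1 : H)) *
          (Algebra.TensorProduct.assoc R R R H H H)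
            ((Algebra.TensorProduct.map (Bialgebra.comulAlgHom R H) (AlgHom.id R H)) Ψ) =
        ((1 : H) ⊗ₜ[R] Ψ) *
          (Algebra.TensorProduct.map (AlgHom.id R H) (Bialgebra.comulAlgHom R H)) Ψ)
    (hcounit_left :
      (TensorProduct.lid R H)
        ((TensorProduct.map (Coalgebra.counit (R := R) (A := H)) LinearMap.id) Ψ) = 1)
    (hcounit_right :
      (TensorProduct.rid R H)
        ((TensorProduct.map LinearMap.id (Coalgebra.counit (R := R) (A := H))) Ψ) = 1)
    (Uinv : H)
    (hU' : Uinv * twistU Ψ = 1) :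
    ∀ t : H,
      LinearMap.mul' R H
          ((TensorProduct.map (twistedAntipode (twistU Ψ) Uinv) LinearMap.id)
            (twistedComul Ψ Ψinv t)) =
        algebraMap R H (Coalgebra.counit t) ∧
      LinearMap.mul' R H
          ((TensorProduct.map LinearMap.id (twistedAntipode (twistU Ψ) Uinv))
            (twistedComul Ψ Ψinv t)) =
        algebraMap R H (Coalgebra.counit t) := by
  have hUV := twistU_mul_antipodeSandwichL_inv hΨ hΨ' hcocycle hcounit_left hcounit_right
  obtain rfl : Uinv = antipodeSandwichL 1 Ψinv := left_inv_eq_right_inv hU' hUV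
  exact fun t => ⟨mul_twistedAntipode_rTensor_twistedComul_apply hΨ' hUV t,
    mul_twistedAntipode_lTensor_twistedComul_apply hΨ' hUV t⟩

/-- **The twisted antipode is an antipode for the twisted bialgebra.**
Let `Ψ` be an invertible element of `H ⊗ H` satisfying the cocycle condition
`Ψ₁₂ * ((Δ ⊗ id) Ψ) = Ψ₂₃ * ((id ⊗ Δ) Ψ)` and the counit normalization
`(ε ⊗ id) Ψ = 1 = (id ⊗ ε) Ψ`.  Set `U := Σ Ψ₍₁₎ * S (Ψ₍₂₎)`, assume `U` is
invertible, and define `S_Ψ t := U * S t * U⁻¹` and `Δ_Ψ t := Ψ * Δ t * Ψ⁻¹`.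
Then `m ∘ (S_Ψ ⊗ id) ∘ Δ_Ψ = η ∘ ε = m ∘ (id ⊗ S_Ψ) ∘ Δ_Ψ`. -/
theorem twistedAntipode_is_antipode {R H : Type*} [CommRing R] [Ring H] [HopfAlgebra R H]
    (Ψ Ψinv : H ⊗[R] H)
    (hΨ : Ψ * Ψinv = 1) (hΨ' : Ψinv * Ψ = 1)
    (hcocycle :
      (Algebra.TensorProduct.assoc R R R H H H) (Ψ ⊗ₜ[R] (1 : H)) *
          (Algebra.TensorProduct.assoc R R R H H H)
            ((Algebra.TensorProduct.map (Bialgebra.comulAlgHom R H) (AlgHom.id R H)) Ψ) =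
        ((1 : H) ⊗ₜ[R] Ψ) *
          (Algebra.TensorProduct.map (AlgHom.id R H) (Bialgebra.comulAlgHom R H)) Ψ)
    (hcounit_left :
      (TensorProduct.lid R H)
        ((TensorProduct.map (Coalgebra.counit (R := R) (A := H)) LinearMap.id) Ψ) = 1)
    (hcounit_right :
      (TensorProduct.rid R H)
        ((TensorProduct.map LinearMap.id (Coalgebra.counit (R := R) (A := H))) Ψ) = 1)
    (Uinv : H)
    (hU : twistU Ψ * Uinv = 1) (hU' : Uinv * twistU Ψ = 1) :
    ∀ t : H,
      LinearMap.mul' R H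
          ((TensorProduct.map (twistedAntipode (twistU Ψ) Uinv) LinearMap.id)
            (twistedComul Ψ Ψinv t)) =
        algebraMap R H (Coalgebra.counit t) ∧
      LinearMap.mul' R H
          ((TensorProduct.map LinearMap.id (twistedAntipode (twistU Ψ) Uinv))
            (twistedComul Ψ Ψinv t)) =
        algebraMap R H (Coalgebra.counit t) :=
  twistedAntipode_is_antipode_general Ψ Ψinv hΨ hΨ' hcocycle hcounit_left hcounit_right Uinv hU'
end
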